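/- For q ≥ 2 and n ≥ 8, the following two inequalities hold: (i) if q^{ℓ−2} ≥ n², then C(n,2) q^{n−ℓ+1} < q^{n−1}/2; (ii) Σ_{d | n, d < n} μ(n/d) q^d < (n/2) q^{n/2} ≤ q^{n−1}/2. Consequently, if ℓ ≥ 2 log_q n + 2 and n ≥ 8, then P_q(n,ℓ) > q^{n−1}/n. -/

import Mathlib

attribute [local instance] Classical.propDecidable

/-- The ℓ-gram profile vector of `x`. -/
noncomputable def profileVec (q n ℓ : ℕ) (x : Fin n → Fin q) : (Fin ℓ → Fin q) → ℕ :=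
  fun z => ((Finset.range (n + 1 - ℓ)).filter
    (fun i => ∀ k : Fin ℓ, ∀ h : i + k.val < n, x ⟨i + k.val, h⟩ = z k)).card

/-- `P_q(n,ℓ)`: the number of distinct ℓ-gram profile vectors of words in `[q]^n`. -/
noncomputable def numProfiles (q n ℓ : ℕ) : ℕ :=
  (Finset.univ.image (profileVec q n ℓ)).card

/-!
A word x whose (ℓ-1)-grams at the n-ℓ+2 possible positions are pairwise distinct is determined
by its ℓ-gram profile: if every ℓ-gram of y occurs in x, consecutive ℓ-grams of y overlap in an
(ℓ-1)-gram, so their occurrences in x are consecutive too, and y = x. For each of the fewer than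
n² pairs of positions at most q^{n-ℓ+1} words repeat an (ℓ-1)-gram there, so once q^{ℓ-2} ≥ n²
at most q^{n-1} words have a repeated (ℓ-1)-gram, and at least q^n - q^{n-1} ≥ q^{n-1} profiles
occur. The remaining inequalities only use |μ| ≤ 1, that proper divisors of n are at most n/2,
and n² ≤ 2^{n-2} for n ≥ 8.
-/

open Finset

theorem Nat.sq_le_two_pow_sub_two {n : ℕ} (hn : 8 ≤ n) : n ^ 2 ≤ 2 ^ (n - 2) := by
  induction n, hn using Nat.le_induction with
  | base => norm_num
  | succ k hk ih =>
    calc (k + 1) ^ 2 ≤ 2 * k ^ 2 := by nlinarith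
      _ ≤ 2 * 2 ^ (k - 2) := by omega
      _ = 2 ^ (k + 1 - 2) := by rw [← pow_succ']; congr 1; omega

theorem Nat.two_mul_le_of_mem_properDivisors {d n : ℕ} (h : d ∈ n.properDivisors) :
    2 * d ≤ n := by
  have h2 : 2 ≤ n / d := Nat.one_lt_div_of_mem_properDivisors h
  calc 2 * d ≤ n / d * d := Nat.mul_le_mul_right d h2
    _ = n := Nat.div_mul_cancel (Nat.mem_properDivisors.1 h).1

theorem Nat.card_properDivisors_le_half (n : ℕ) : #n.properDivisors ≤ n / 2 := by
  have hsub : n.properDivisors ⊆ Ioc 0 (n / 2) := fun d hd =>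
    mem_Ioc.2 ⟨Nat.pos_of_mem_properDivisors hd,
      (Nat.le_div_iff_mul_le two_pos).2 (by linarith [Nat.two_mul_le_of_mem_properDivisors hd])⟩
  simpa using card_le_card hsub

theorem choose_two_mul_pow_lt {x : ℝ} (hx : 0 < x) {n ℓ : ℕ} (hn : 1 ≤ n) (hℓ2 : 2 ≤ ℓ)
    (hℓn : ℓ ≤ n) (h : (n : ℝ) ^ 2 ≤ x ^ (ℓ - 2)) :
    (n.choose 2 : ℝ) * x ^ (n - ℓ + 1) < x ^ (n - 1) / 2 := by
  have hchoose : (n.choose 2 : ℝ) * 2 < n ^ 2 := by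
    have : n.choose 2 * 2 < n ^ 2 := by
      rw [Nat.choose_two_right]
      calc n * (n - 1) / 2 * 2 ≤ n * (n - 1) := Nat.div_mul_le_self _ 2
        _ < n ^ 2 := by rw [sq]; exact Nat.mul_lt_mul_of_pos_left (by omega) (by omega)
    exact_mod_cast this
  calc (n.choose 2 : ℝ) * x ^ (n - ℓ + 1) < (n ^ 2 / 2) * x ^ (n - ℓ + 1) := by
        gcongr; linarith
    _ ≤ (x ^ (ℓ - 2) / 2) * x ^ (n - ℓ + 1) := by gcongr
    _ = x ^ (n - 1) / 2 := by rw [div_mul_eq_mul_div, ← pow_add]; congr 2; omega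

theorem sum_properDivisors_moebius_mul_pow_lt {x : ℝ} (hx : 1 < x) {n : ℕ} (hn : 2 < n) :
    ∑ d ∈ n.properDivisors, ((ArithmeticFunction.moebius (n / d) : ℤ) : ℝ) * x ^ d
      < ((n : ℝ) / 2) * x ^ ((n : ℝ) / 2) := by
  have hμ (k : ℕ) : ((ArithmeticFunction.moebius k : ℤ) : ℝ) ≤ 1 := by
    exact_mod_cast le_of_abs_le ArithmeticFunction.abs_moebius_le_one
  have hterm (d : ℕ) (hd : (d : ℝ) ≤ (n : ℝ) / 2) :
      ((ArithmeticFunction.moebius (n / d) : ℤ) : ℝ) * x ^ d ≤ x ^ (d : ℝ) := by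
    rw [Real.rpow_natCast]
    nlinarith [hμ (n / d), pow_pos (zero_lt_one.trans hx) d]
  have hle : ∀ d ∈ n.properDivisors,
      ((ArithmeticFunction.moebius (n / d) : ℤ) : ℝ) * x ^ d ≤ x ^ ((n : ℝ) / 2) := by
    intro d hd
    have h2d : (2 * d : ℝ) ≤ n := by exact_mod_cast Nat.two_mul_le_of_mem_properDivisors hd
    exact (hterm d (by linarith)).trans (Real.rpow_le_rpow_of_exponent_le hx.le (by linarith))
  have hlt : ((ArithmeticFunction.moebius (n / 1) : ℤ) : ℝ) * x ^ 1 < x ^ ((n : ℝ) / 2) := by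
    have hn' : (2 : ℝ) < n := by exact_mod_cast hn
    refine (hterm 1 (by push_cast; linarith)).trans_lt ?_
    exact Real.rpow_lt_rpow_of_exponent_lt hx (by push_cast; linarith)
  have hcard : (#n.properDivisors : ℝ) ≤ (n : ℝ) / 2 :=
    (Nat.cast_le.2 (Nat.card_properDivisors_le_half n)).trans Nat.cast_div_le
  calc ∑ d ∈ n.properDivisors, ((ArithmeticFunction.moebius (n / d) : ℤ) : ℝ) * x ^ d
      < ∑ _d ∈ n.properDivisors, x ^ ((n : ℝ) / 2) :=
        sum_lt_sum hle ⟨1, Nat.one_mem_properDivisors_iff_one_lt.2 (by omega), hlt⟩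
    _ = #n.properDivisors * x ^ ((n : ℝ) / 2) := by rw [sum_const, nsmul_eq_mul]
    _ ≤ ((n : ℝ) / 2) * x ^ ((n : ℝ) / 2) := by gcongr

theorem half_mul_rpow_half_le {x : ℝ} (hx : 2 ≤ x) {n : ℕ} (hn : 8 ≤ n) :
    ((n : ℝ) / 2) * x ^ ((n : ℝ) / 2) ≤ x ^ (n - 1) / 2 := by
  have hx0 : 0 ≤ x := by linarith
  have hsq : (n : ℝ) ^ 2 ≤ (x ^ (((n : ℝ) - 2) / 2)) ^ 2 := by
    rw [← Real.rpow_mul_natCast hx0, Nat.cast_ofNat, div_mul_cancel₀ _ two_ne_zero,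
      show (n : ℝ) - 2 = ((n - 2 : ℕ) : ℝ) by push_cast [show 2 ≤ n by omega]; ring,
      Real.rpow_natCast]
    calc (n : ℝ) ^ 2 ≤ 2 ^ (n - 2) := by exact_mod_cast Nat.sq_le_two_pow_sub_two hn
      _ ≤ x ^ (n - 2) := by gcongr
  have hn_le : (n : ℝ) ≤ x ^ (((n : ℝ) - 2) / 2) :=
    (pow_le_pow_iff_left₀ (by positivity) (by positivity) two_ne_zero).1 hsq
  have hsplit : x ^ (((n : ℝ) - 2) / 2) * x ^ ((n : ℝ) / 2) = x ^ (n - 1) := by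
    rw [← Real.rpow_add (by linarith), ← Real.rpow_natCast,
      show ((n - 1 : ℕ) : ℝ) = (n : ℝ) - 1 by push_cast [show 1 ≤ n by omega]; ring]
    ring_nf
  calc ((n : ℝ) / 2) * x ^ ((n : ℝ) / 2) ≤ (x ^ (((n : ℝ) - 2) / 2) / 2) * x ^ ((n : ℝ) / 2) := by
        gcongr
    _ = x ^ (n - 1) / 2 := by rw [div_mul_eq_mul_div, hsplit]

theorem sq_le_pow_of_two_mul_logb_add_two_le {b x : ℝ} (hb : 1 < b) (hx : 0 < x) {ℓ : ℕ}
    (hℓ : 2 ≤ ℓ) (h : 2 * Real.logb b x + 2 ≤ ℓ) : x ^ 2 ≤ b ^ (ℓ - 2) := by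
  have hlog : Real.logb b (x ^ 2) ≤ ((ℓ - 2 : ℕ) : ℝ) := by
    rw [Real.logb_pow]; push_cast [hℓ]; linarith
  rw [Real.logb_le_iff_le_rpow hb (by positivity), Real.rpow_natCast] at hlog
  exact hlog

section Windows

open Fin.NatCast

variable {α : Type*} {n : ℕ} [NeZero n]

/-- Positions are read modulo `n`; only windows lying inside the word are ever used. -/
def window (x : Fin n → α) (i m : ℕ) : Fin m → α := fun k => x ((i + k : ℕ) : Fin n)

theorem window_apply_of_lt {x : Fin n → α} {i m : ℕ} (k : Fin m) (h : i + k < n) :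
    window x i m k = x ⟨i + k, h⟩ :=
  congrArg x (Fin.natCast_eq_mk h)

/-- If `σ i` is an occurrence in `x` of the `(m+1)`-window of `y` at `i`, the `m`-windows of `x` at
`σ i + 1` and `σ (i+1)` coincide, so `σ (i+1) = σ i + 1`; hence `σ` is a shift, and the shift
is `0` since `σ` stays below `n - m`. -/
theorem eq_of_forall_window_succ_mem {x y : Fin n → α} {m : ℕ} (hmn : m < n)
    (hx : Set.InjOn (window x · m) (Set.Iio (n + 1 - m)))
    (hy : ∀ i < n - m, ∃ j < n - m, window x j (m + 1) = window y i (m + 1)) : y = x := by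
  choose! σ hσ hσy using hy
  have hxy (i t : ℕ) (hi : i < n - m) (ht : t ≤ m) :
      x ((σ i + t : ℕ) : Fin n) = y ((i + t : ℕ) : Fin n) :=
    congrFun (hσy i hi) ⟨t, by omega⟩
  have hσ_succ (i : ℕ) (hi : i + 1 < n - m) : σ (i + 1) = σ i + 1 := by
    refine hx (Set.mem_Iio.2 (by have := hσ (i + 1) hi; omega))
      (Set.mem_Iio.2 (by have := hσ i (by omega); omega)) (funext fun k => ?_)
    change x ((σ (i + 1) + k : ℕ) : Fin n) = x ((σ i + 1 + k : ℕ) : Fin n)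
    rw [hxy (i + 1) k hi (by omega), show σ i + 1 + k = σ i + (k + 1) by omega,
      hxy i (k + 1) (by omega) (by omega), show i + (k + 1) = i + 1 + k by omega]
  have hσ_eq (i : ℕ) (hi : i < n - m) : σ i = σ 0 + i := by
    induction i with
    | zero => rfl
    | succ i ih => rw [hσ_succ i hi, ih (by omega)]; rfl
  have hσ_zero : σ 0 = 0 := by
    have := hσ (n - m - 1) (by omega)
    rw [hσ_eq _ (by omega)] at this
    omega
  funext a
  have h := hxy (min (a : ℕ) (n - m - 1)) (a - min (a : ℕ) (n - m - 1)) (by omega) (by omega)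
  rw [hσ_eq _ (by omega), hσ_zero, zero_add, Nat.add_sub_cancel' (min_le_left _ _),
    Fin.cast_val_eq_self] at h
  exact h.symm

/-- The letters at positions `j, …, j+m-1` copy earlier ones, so the other `n - m` letters
determine the word. -/
theorem card_filter_window_eq_window_le [Fintype α] {i j m : ℕ} (hij : i < j)
    (hjm : j + m ≤ n) :
    #{x : Fin n → α | window x i m = window x j m} ≤ Fintype.card α ^ (n - m) := by
  let skip (k : ℕ) : ℕ := if k < j then k else k + m
  let restrict (x : Fin n → α) (k : Fin (n - m)) : α := x (skip k : Fin n)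
  calc _ ≤ #(univ : Finset (Fin (n - m) → α)) :=
        card_le_card_of_injOn restrict (fun _ _ => mem_univ _) ?_
    _ = Fintype.card α ^ (n - m) := by simp
  intro x hx y hy hxy
  simp only [coe_filter, mem_univ, true_and, Set.mem_ofPred_eq] at hx hy
  suffices h : ∀ v < n, x (v : Fin n) = y (v : Fin n) by
    funext a; simpa using h a a.isLt
  intro v
  induction v using Nat.strong_induction_on with
  | _ v ih =>
    intro hv
    rcases lt_or_ge v j with hvj | hvj
    · have := congrFun hxy ⟨v, by omega⟩
      simpa [restrict, skip, hvj] using this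
    rcases lt_or_ge v (j + m) with hvjm | hvjm
    · obtain ⟨t, rfl⟩ : ∃ t, v = j + t := ⟨v - j, by omega⟩
      have hxt : x ((i + t : ℕ) : Fin n) = x ((j + t : ℕ) : Fin n) :=
        congrFun hx ⟨t, by omega⟩
      have hyt : y ((i + t : ℕ) : Fin n) = y ((j + t : ℕ) : Fin n) :=
        congrFun hy ⟨t, by omega⟩
      rw [← hxt, ← hyt, ih (i + t) (by omega) (by omega)]
    · have := congrFun hxy ⟨v - m, by omega⟩
      simp only [restrict, skip, if_neg (show ¬ v - m < j by omega),
        Nat.sub_add_cancel (show m ≤ v by omega)] at this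
      exact this

theorem card_filter_not_injOn_window_le [Fintype α] (m : ℕ) :
    #{x : Fin n → α | ¬ Set.InjOn (window x · m) (Set.Iio (n + 1 - m))}
      ≤ (n + 1 - m) ^ 2 * Fintype.card α ^ (n - m) := by
  set pairs := {p ∈ range (n + 1 - m) ×ˢ range (n + 1 - m) | p.1 < p.2}
  have hsub : ({x | ¬ Set.InjOn (window x · m) (Set.Iio (n + 1 - m))} : Finset (Fin n → α)) ⊆
      pairs.biUnion fun p => {x | window x p.1 m = window x p.2 m} := by
    intro x hx
    simp only [Set.InjOn, mem_filter, mem_univ, true_and, not_forall] at hx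
    obtain ⟨i, hi, j, hj, hij, hne⟩ := hx
    simp only [Set.mem_Iio] at hi hj
    rcases lt_or_gt_of_ne hne with h | h
    · exact mem_biUnion.2 ⟨(i, j), by simp [pairs, hi, hj, h], by simpa using hij⟩
    · exact mem_biUnion.2 ⟨(j, i), by simp [pairs, hi, hj, h], by simpa using hij.symm⟩
  have hpairs : #pairs ≤ (n + 1 - m) ^ 2 := by
    simpa [sq] using card_filter_le (range (n + 1 - m) ×ˢ range (n + 1 - m)) _
  calc _ ≤ _ := card_le_card hsub
    _ ≤ #pairs * Fintype.card α ^ (n - m) := by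
        refine card_biUnion_le_card_mul _ _ _ fun p hp => ?_
        simp only [pairs, mem_filter, mem_product, mem_range] at hp
        exact card_filter_window_eq_window_le hp.2 (by omega)
    _ ≤ (n + 1 - m) ^ 2 * Fintype.card α ^ (n - m) := Nat.mul_le_mul_right _ hpairs

theorem profileVec_eq_card_filter_window {q ℓ : ℕ} (x : Fin n → Fin q) (z : Fin ℓ → Fin q) :
    profileVec q n ℓ x z = #{i ∈ range (n + 1 - ℓ) | window x i ℓ = z} := by
  refine congrArg card (filter_congr fun i hi => ⟨fun h => funext fun k => ?_, fun h k hk => ?_⟩)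
  · have hk : i + k < n := by simp only [mem_range] at hi; omega
    rw [window_apply_of_lt k hk, h k hk]
  · rw [← h, window_apply_of_lt k hk]

theorem eq_of_profileVec_eq {q m : ℕ} (hmn : m < n) {x y : Fin n → Fin q}
    (hx : Set.InjOn (window x · m) (Set.Iio (n + 1 - m)))
    (h : profileVec q n (m + 1) x = profileVec q n (m + 1) y) : x = y := by
  refine (eq_of_forall_window_succ_mem hmn hx fun i hi => ?_).symm
  have hpos : 0 < profileVec q n (m + 1) x (window y i (m + 1)) := by
    rw [h, profileVec_eq_card_filter_window]
    exact card_pos.2 ⟨i, mem_filter.2 ⟨mem_range.2 (by omega), rfl⟩⟩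
  rw [profileVec_eq_card_filter_window] at hpos
  obtain ⟨j, hj⟩ := card_pos.1 hpos
  rw [mem_filter, mem_range] at hj
  exact ⟨j, by omega, hj.2⟩

theorem pow_le_numProfiles_add {q m : ℕ} (hmn : m < n) :
    q ^ n ≤ numProfiles q n (m + 1) + (n + 1 - m) ^ 2 * q ^ (n - m) := by
  have hsplit := card_filter_add_card_filter_not (s := (univ : Finset (Fin n → Fin q)))
    fun x => Set.InjOn (window x · m) (Set.Iio (n + 1 - m))
  simp only [card_univ, Fintype.card_fun, Fintype.card_fin] at hsplit
  set good : Finset (Fin n → Fin q) := {x | Set.InjOn (window x · m) (Set.Iio (n + 1 - m))}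
  have hgood : #good ≤ numProfiles q n (m + 1) := by
    rw [← card_image_of_injOn fun x hx y _ hxy =>
      eq_of_profileVec_eq hmn (by simpa [good] using hx) hxy]
    exact card_le_card (image_subset_image (subset_univ _))
  have hbad := card_filter_not_injOn_window_le (α := Fin q) (n := n) m
  rw [Fintype.card_fin] at hbad
  omega

end Windows

theorem pow_pred_le_numProfiles {q n ℓ : ℕ} (hq : 2 ≤ q) (hℓ2 : 2 ≤ ℓ) (hℓn : ℓ ≤ n)
    (h : n ^ 2 ≤ q ^ (ℓ - 2)) : q ^ (n - 1) ≤ numProfiles q n ℓ := by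
  have : NeZero n := ⟨by omega⟩
  obtain ⟨m, rfl⟩ : ∃ m, ℓ = m + 1 := ⟨ℓ - 1, by omega⟩
  have hcount := pow_le_numProfiles_add (q := q) (show m < n by omega)
  have hbad : (n + 1 - m) ^ 2 * q ^ (n - m) ≤ q ^ (n - 1) :=
    calc (n + 1 - m) ^ 2 * q ^ (n - m) ≤ q ^ (m + 1 - 2) * q ^ (n - m) :=
          Nat.mul_le_mul_right _ ((Nat.pow_le_pow_left (by omega) 2).trans h)
      _ = q ^ (n - 1) := by rw [← pow_add]; congr 1; omega
  have hsucc : q ^ n = q * q ^ (n - 1) := by rw [← pow_succ']; congr 1; omega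
  nlinarith

/-- For `q ≥ 2` and `n ≥ 8`:
(i) if `q^{ℓ−2} ≥ n²` then `C(n,2) q^{n−ℓ+1} < q^{n−1}/2`;
(ii) `Σ_{d ∣ n, d < n} μ(n/d) q^d < (n/2) q^{n/2} ≤ q^{n−1}/2`;
and consequently if `ℓ ≥ 2 log_q n + 2` then `P_q(n,ℓ) > q^{n−1}/n`. -/
theorem stmt_17 (q n ℓ : ℕ) (hq : 2 ≤ q) (hn : 8 ≤ n) (hℓ2 : 2 ≤ ℓ) (hℓn : ℓ ≤ n) :
    (((n : ℝ) ^ 2 ≤ (q : ℝ) ^ (ℓ - 2) →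
      (n.choose 2 : ℝ) * (q : ℝ) ^ (n - ℓ + 1) < (q : ℝ) ^ (n - 1) / 2)) ∧
    ((∑ d ∈ n.properDivisors, ((ArithmeticFunction.moebius (n / d) : ℤ) : ℝ) * (q : ℝ) ^ d
        < ((n : ℝ) / 2) * (q : ℝ) ^ ((n : ℝ) / 2)) ∧
      ((n : ℝ) / 2) * (q : ℝ) ^ ((n : ℝ) / 2) ≤ (q : ℝ) ^ (n - 1) / 2) ∧
    (2 * Real.logb q n + 2 ≤ (ℓ : ℝ) →
      (q : ℝ) ^ (n - 1) / (n : ℝ) < (numProfiles q n ℓ : ℝ)) := by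
  have hqR : (2 : ℝ) ≤ q := by exact_mod_cast hq
  have hnR : (1 : ℝ) < n := by exact_mod_cast (by omega : 1 < n)
  refine ⟨choose_two_mul_pow_lt (by linarith) (by omega) hℓ2 hℓn,
    ⟨sum_properDivisors_moebius_mul_pow_lt (by linarith) (by omega), half_mul_rpow_half_le hqR hn⟩,
    fun hlog => ?_⟩
  have hsq : n ^ 2 ≤ q ^ (ℓ - 2) := by
    exact_mod_cast sq_le_pow_of_two_mul_logb_add_two_le (by linarith) (by linarith) hℓ2 hlog
  calc (q : ℝ) ^ (n - 1) / n < (q : ℝ) ^ (n - 1) := div_lt_self (by positivity) hnR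
    _ ≤ numProfiles q n ℓ := by exact_mod_cast pow_pred_le_numProfiles hq hℓ2 hℓn hsq
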